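/- Every tree z that is less than or equal to t₁ ⋋ t₂ in the Tamari order is of the form z = z₁ ⋋ z₂ with zᵢ having the same number of leaves as tᵢ and zᵢ ≤_T tᵢ, for i = 1, 2. -/

import Mathlib

/-!
A rotation never moves the subtree `t₁` off the leftmost branch of `t₁ ⋋ t₂`: if a single
rotation produces `u ⋋ w`, it acts either inside `u`, or inside `w` (possibly at a node of
its leftmost branch, which carries the grafted `u ∨ |`), so its source is `z₁ ⋋ z₂` with
`z₁ ≤_T u` and `z₂ ≤_T w`. Induction along a chain of rotations, together with the fact that
rotations preserve the number of leaves, gives the theorem.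
-/

open Classical

/-- Planar binary rooted trees. `leaf` is the unique tree `|` with one leaf. -/
inductive PBT : Type
  | leaf : PBT
  | node : PBT → PBT → PBT
  deriving DecidableEq

/-- Number of leaves of a planar binary rooted tree. -/
def leavesCount : PBT → ℕ
  | .leaf => 1
  | .node l r => leavesCount l + leavesCount r

/-- Graft the tree `w` onto the leftmost (first) leaf of `t`. -/
def graft1 : PBT → PBT → PBT
  | .leaf, w => w
  | .node l r, w => .node (graft1 l w) r

/-- The product `t ⋋ w := w ∘₁ (t ∨ |)`. -/
def lprod (t w : PBT) : PBT := graft1 w (.node t .leaf)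

/-- A tree is `⋋`-irreducible if it is not a product of two (nonempty) trees. -/
def Irr (t : PBT) : Prop := ¬ ∃ u w : PBT, t = lprod u w

/-- One covering move of the Tamari order: a right rotation
`(a ∨ b) ∨ c ↦ a ∨ (b ∨ c)` applied at some internal node. -/
inductive TStep : PBT → PBT → Prop
  | rot (a b c : PBT) : TStep (.node (.node a b) c) (.node a (.node b c))
  | left {a a' : PBT} (c : PBT) : TStep a a' → TStep (.node a c) (.node a' c)
  | right (a : PBT) {c c' : PBT} : TStep c c' → TStep (.node a c) (.node a c')

/-- The Tamari order on planar binary rooted trees: the reflexive transitive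
closure of the rotation moves. -/
def tle : PBT → PBT → Prop := Relation.ReflTransGen TStep

@[simp]
lemma lprod_leaf (u : PBT) : lprod u .leaf = .node u .leaf := rfl

@[simp]
lemma lprod_node (u l r : PBT) : lprod u (.node l r) = .node (lprod u l) r := rfl

lemma TStep.leavesCount_eq {z z' : PBT} (h : TStep z z') : leavesCount z = leavesCount z' := by
  induction h with
  | rot a b c => simp only [leavesCount, Nat.add_assoc]
  | left c _ ih => simp only [leavesCount, ih]
  | right a _ ih => simp only [leavesCount, ih]

lemma tle.leavesCount_eq {z z' : PBT} (h : tle z z') : leavesCount z = leavesCount z' := by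
  induction h with
  | refl => rfl
  | tail _ hs ih => exact ih.trans hs.leavesCount_eq

lemma tle.node_left {a a' : PBT} (c : PBT) (h : tle a a') : tle (.node a c) (.node a' c) :=
  Relation.ReflTransGen.lift (PBT.node · c) (fun _ _ hs => TStep.left c hs) _ _ h

lemma tle.node_right (a : PBT) {c c' : PBT} (h : tle c c') : tle (.node a c) (.node a c') :=
  Relation.ReflTransGen.lift (PBT.node a ·) (fun _ _ hs => TStep.right a hs) _ _ h

lemma TStep.exists_eq_lprod {u w z : PBT} (h : TStep z (lprod u w)) :
    ∃ z₁ z₂ : PBT, z = lprod z₁ z₂ ∧ tle z₁ u ∧ tle z₂ w := by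
  induction w generalizing z with
  | leaf =>
    rw [lprod_leaf] at h
    cases h with
    | left _ hu => exact ⟨_, .leaf, rfl, .single hu, .refl⟩
    | right _ hleaf => nomatch hleaf
  | node l r ihl _ =>
    rw [lprod_node] at h
    cases h with
    | rot _ b c => exact ⟨u, .node (.node l b) c, rfl, .refl, .single (TStep.rot l b c)⟩
    | left _ hl =>
      obtain ⟨z₁, z₂, rfl, h₁, h₂⟩ := ihl hl
      exact ⟨z₁, .node z₂ r, rfl, h₁, h₂.node_left r⟩
    | right _ hr => exact ⟨u, .node l _, rfl, .refl, tle.node_right l (.single hr)⟩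

lemma tle.exists_eq_lprod {u w z : PBT} (h : tle z (lprod u w)) :
    ∃ z₁ z₂ : PBT, z = lprod z₁ z₂ ∧ tle z₁ u ∧ tle z₂ w := by
  induction h using Relation.ReflTransGen.head_induction_on with
  | refl => exact ⟨u, w, rfl, .refl, .refl⟩
  | head hs _ ih =>
    obtain ⟨y₁, y₂, rfl, hy₁, hy₂⟩ := ih
    obtain ⟨z₁, z₂, rfl, hz₁, hz₂⟩ := hs.exists_eq_lprod
    exact ⟨z₁, z₂, rfl, hz₁.trans hy₁, hz₂.trans hy₂⟩

/-- Every tree `z ≤_T t₁ ⋋ t₂` is of the form `z = z₁ ⋋ z₂` with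
`|zᵢ| = |tᵢ|` and `zᵢ ≤_T tᵢ` for `i = 1, 2`. -/
theorem stmt13 (t₁ t₂ z : PBT) (h : tle z (lprod t₁ t₂)) :
    ∃ z₁ z₂ : PBT, z = lprod z₁ z₂ ∧
      leavesCount z₁ = leavesCount t₁ ∧ leavesCount z₂ = leavesCount t₂ ∧
      tle z₁ t₁ ∧ tle z₂ t₂ := by
  obtain ⟨z₁, z₂, rfl, h₁, h₂⟩ := h.exists_eq_lprod
  exact ⟨z₁, z₂, rfl, h₁.leavesCount_eq, h₂.leavesCount_eq, h₁, h₂⟩
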